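/- For all natural numbers n ≥ 1 and m, there exists a natural number c such that f(c) ≡ m (mod n); that is, the range of f meets every congruence class modulo n. -/

import Mathlib

noncomputable def phi : ℝ := (1 + Real.sqrt 5) / 2

noncomputable def f (n : ℕ) : ℕ := ⌊phi * n⌋₊

/-!
Since `φ / n` is irrational, the multiples `c • φ` (`c : ℕ`) are dense on the circle `ℝ ⧸ nℤ`.
Hence some `c * φ` lies in `(m + k n, m + 1 + k n)` for an integer `k`, and then
`⌊c φ⌋ = m + k n ≡ m (mod n)`.
-/

theorem AddCircle.denseRange_nsmul_coe {a p : ℝ} (hp : 0 < p) (h : Irrational (a / p)) :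
    DenseRange (fun c : ℕ => c • (a : AddCircle p)) :=
  haveI : Fact (0 < p) := ⟨hp⟩
  denseRange_zsmul_iff_nsmul.mp (AddCircle.denseRange_zsmul_coe_iff.mpr h)

theorem exists_nat_mul_add_int_mul_mem_Ioo {a p x y : ℝ} (hp : 0 < p) (h : Irrational (a / p))
    (hxy : x < y) : ∃ c : ℕ, ∃ k : ℤ, c * a + k * p ∈ Set.Ioo x y := by
  obtain ⟨c, r, hr, hcr⟩ := (AddCircle.denseRange_nsmul_coe hp h).exists_mem_open
    (QuotientAddGroup.isOpenMap_coe _ isOpen_Ioo) ((Set.nonempty_Ioo.2 hxy).image _)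
  rw [← AddCircle.coe_nsmul, QuotientAddGroup.eq_iff_sub_mem,
    AddSubgroup.mem_zmultiples_iff] at hcr
  obtain ⟨k, hk⟩ := hcr
  rw [nsmul_eq_mul, zsmul_eq_mul] at hk
  exact ⟨c, k, by rwa [hk, add_sub_cancel]⟩

theorem exists_floor_mul_natCast_modEq {α : ℝ} (hα : 0 < α) (hirr : Irrational α) {n : ℕ}
    (hn : 0 < n) (m : ℕ) : ∃ c : ℕ, ⌊α * c⌋₊ ≡ m [MOD n] := by
  obtain ⟨c, k, hlo, hhi⟩ := exists_nat_mul_add_int_mul_mem_Ioo (x := m) (y := m + 1)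
    (Nat.cast_pos.2 hn) (hirr.div_natCast hn.ne') (lt_add_one _)
  have hfloor : ⌊α * c⌋ = m - k * n := by
    rw [Int.floor_eq_iff]
    push_cast
    constructor <;> linarith
  refine ⟨c, ?_⟩
  rw [← Int.natCast_modEq_iff, Int.natCast_floor_eq_floor (by positivity), hfloor]
  exact Int.modEq_iff_dvd.2 ⟨k, by ring⟩

theorem phi_eq_goldenRatio : phi = Real.goldenRatio := rfl

theorem f_surjective_mod (n : ℕ) (hn : 1 ≤ n) (m : ℕ) :
    ∃ c : ℕ, f c ≡ m [MOD n] := by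
  unfold f
  rw [phi_eq_goldenRatio]
  exact exists_floor_mul_natCast_modEq Real.goldenRatio_pos Real.goldenRatio_irrational hn m
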